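/- For the process Y_n = 1_C(T^n ω) constructed from the binary odometer, the scaled cumulant limit along n_i = 2^{i-1} satisfies lim_{i→∞} (1/n_i) log E[exp(θ Σ_{j=0}^{n_i-1} Y_j)] = θ for every θ > 0; hence the set {θ : λ(θ) - θ·1 < 0} is empty for s = 1, where λ(θ) = limsup_n (1/n) log E[exp(θ Σ_{i=1}^n Y_i)]. -/

import Mathlib

open MeasureTheory Filter

noncomputable def binDigit (i : ℕ) (r : ℝ) : ℤ := ⌊r * 2 ^ i⌋ % 2

noncomputable def binTau (r : ℝ) : ℕ := sInf {i | 0 < i ∧ binDigit i r = 1}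

/-- The binary odometer `T r = r - 2^{-τ(r)} + ∑_{l=1}^{τ(r)-1} 2^{-l}`. -/
noncomputable def TOdo (r : ℝ) : ℝ :=
  r - (2 : ℝ)⁻¹ ^ binTau r + ∑ l ∈ Finset.Icc 1 (binTau r - 1), (2 : ℝ)⁻¹ ^ l

/-- `Jset i j = [0,1) ∩ T^{-j} [0, 2^{-(2i+1)})`, i.e. the part of the `j`-th
preimage of `I_0^{2i+1}` inside the unit interval. -/
noncomputable def Jset (i j : ℕ) : Set ℝ :=
  Set.Ico (0 : ℝ) 1 ∩ (TOdo^[j] ⁻¹' Set.Ico (0 : ℝ) ((2 : ℝ)⁻¹ ^ (2 * i + 1)))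

/-- `A_0 = ∅`, and for `i ≥ 1`, `A_i = ⋃_{j=0}^{2^{i-1}-1} T^{-j} [0, 2^{-2i-1})`. -/
noncomputable def Aset : ℕ → Set ℝ
  | 0 => ∅
  | i + 1 => ⋃ j ∈ Finset.range (2 ^ i), Jset (i + 1) j

/-- `B_0 = [0, 1/4)`, and for `i ≥ 1`, `B_i = ⋃_{j=2^{i-1}}^{2^i-1} T^{-j} [0, 2^{-2i-1})`. -/
noncomputable def Bset : ℕ → Set ℝ
  | 0 => Set.Ico (0 : ℝ) (1 / 4)
  | i + 1 => ⋃ j ∈ Finset.Ico (2 ^ i) (2 ^ (i + 1)), Jset (i + 1) j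

/-- `C_i = A_i ∪ B_i`. -/
noncomputable def Cset (i : ℕ) : Set ℝ := Aset i ∪ Bset i

/-- `C = ⋃_{i ≥ 0} C_i`. -/
noncomputable def CsetAll : Set ℝ := ⋃ i, Cset i

/-! The bound `log E[exp(θ ∑_{k ∈ F} Y_k)] ≤ |θ| #F` is immediate from `0 ≤ Y ≤ 1`. For the
lower bound, if `T^b ω ∈ [0, 2^{-(2i+3)})` then the `2^i` points `T^k ω`, `b - 2^i < k ≤ b`, lie
in `A_{i+1} ⊆ C`, so `E[exp(θ ∑ Y_k)] ≥ e^{θ 2^i} 2^{-(2i+3)}`. The set of such `ω` contains a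
dyadic interval of length `2^{-(2i+3)}`: the odometer adds one to the reversed binary expansion,
so it is the interval indexed by the digits of `b` reversed. Since `(2i+3)/2^i → 0`, the
normalised cumulants along `n = 2^i` tend to `θ`, for both windows `[0, 2^i)` and `[1, 2^i]`. -/

open Real ProbabilityTheory

theorem Nat.measurable_sInf_setOf {α : Type*} [MeasurableSpace α] {p : α → ℕ → Prop}
    (hp : ∀ n, Measurable (p · n)) : Measurable fun x ↦ sInf {n | p x n} := by
  classical
  refine measurable_to_countable' fun t ↦ ?_
  have hpre : (fun x ↦ sInf {n | p x n}) ⁻¹' {t} =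
      {x | (p x t ∧ ∀ m < t, ¬ p x m) ∨ (t = 0 ∧ ∀ m, ¬ p x m)} := by
    ext x
    by_cases hx : ∃ n, p x n
    · have hnot : ¬ (t = 0 ∧ ∀ m, ¬ p x m) := fun h ↦ hx.elim h.2
      rw [Set.mem_preimage, Set.mem_singleton_iff, Nat.sInf_def (s := {n | p x n}) hx,
        Nat.find_eq_iff]
      simp [hnot]
    · push Not at hx
      simp [hx, eq_comm]
  rw [hpre]
  exact Measurable.setOf (by fun_prop)

section
variable {Ω : Type*} [MeasurableSpace Ω] {μ : Measure Ω} {X : Ω → ℝ} {c t : ℝ}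

lemma cgf_le_abs_mul [IsProbabilityMeasure μ] (hX : AEMeasurable X μ) (hc : ∀ ω, |X ω| ≤ c) :
    cgf X μ t ≤ |t| * c := by
  have hint : Integrable (fun ω ↦ exp (t * X ω)) μ :=
    integrable_exp_mul_of_mem_Icc hX (ae_of_all _ fun ω ↦ abs_le.mp (hc ω))
  have hmgf : mgf X μ t ≤ exp (|t| * c) := by
    calc mgf X μ t ≤ ∫ _, exp (|t| * c) ∂μ := integral_mono hint (integrable_const _)
          fun ω ↦ exp_le_exp.mpr ((le_abs_self _).trans (by
            rw [abs_mul]; exact mul_le_mul_of_nonneg_left (hc ω) (abs_nonneg t)))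
      _ = exp (|t| * c) := by simp
  calc cgf X μ t ≤ log (exp (|t| * c)) := log_le_log (mgf_pos hint) hmgf
    _ = |t| * c := log_exp _

lemma mul_add_log_measureReal_le_cgf (hint : Integrable (fun ω ↦ exp (t * X ω)) μ)
    {E : Set Ω} (hE : MeasurableSet E) (hμE : 0 < μ.real E) (hXE : ∀ ω ∈ E, X ω = c) :
    t * c + log (μ.real E) ≤ cgf X μ t := by
  have hmgf : exp (t * c) * μ.real E ≤ mgf X μ t := by
    calc exp (t * c) * μ.real E = ∫ ω in E, exp (t * X ω) ∂μ := by
          rw [setIntegral_congr_fun hE fun ω hω ↦ by rw [hXE ω hω], setIntegral_const,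
            smul_eq_mul, mul_comm]
      _ ≤ mgf X μ t := setIntegral_le_integral hint (ae_of_all _ fun ω ↦ (exp_pos _).le)
  calc t * c + log (μ.real E) = log (exp (t * c) * μ.real E) := by
        rw [log_mul (exp_pos _).ne' hμE.ne', log_exp]
    _ ≤ cgf X μ t := log_le_log (by positivity) hmgf

end

lemma sum_Icc_inv_two_pow (n : ℕ) : ∑ l ∈ Finset.Icc 1 n, (2 : ℝ)⁻¹ ^ l = 1 - 2⁻¹ ^ n := by
  induction n with
  | zero => simp
  | succ n ih =>
    rw [Finset.sum_Icc_succ_top (by omega), ih, pow_succ]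
    ring

lemma floor_mul_two_pow_eq_zero {r : ℝ} {s t : ℕ} (hst : s < t) (h0 : 0 ≤ r)
    (h2 : r * 2 ^ t < 2) : ⌊r * 2 ^ s⌋ = 0 := by
  rw [Int.floor_eq_zero_iff]
  refine ⟨by positivity, ?_⟩
  have : (2 : ℝ) ^ s * 2 ≤ 2 ^ t := by
    rw [← pow_succ]; exact pow_le_pow_right₀ one_le_two hst
  nlinarith

lemma binTau_eq {r : ℝ} {t : ℕ} (ht : 1 ≤ t) (h1 : 1 ≤ r * 2 ^ t) (h2 : r * 2 ^ t < 2) :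
    binTau r = t := by
  have h0 : 0 ≤ r := by
    by_contra! hr; nlinarith [pow_pos (two_pos (α := ℝ)) t]
  have hdt : binDigit t r = 1 := by
    have : ⌊r * 2 ^ t⌋ = 1 := by rw [Int.floor_eq_iff]; push_cast; constructor <;> linarith
    simp [binDigit, this]
  refine le_antisymm (Nat.sInf_le ⟨ht, hdt⟩) (le_csInf ⟨t, ht, hdt⟩ fun s hs ↦ ?_)
  by_contra! hst
  simp [binDigit, floor_mul_two_pow_eq_zero hst h0 h2] at hs

lemma TOdo_eq {r : ℝ} {t : ℕ} (ht : 1 ≤ t) (h1 : 1 ≤ r * 2 ^ t) (h2 : r * 2 ^ t < 2) :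
    TOdo r = r + 1 - 3 * 2⁻¹ ^ t := by
  obtain ⟨s, rfl⟩ := Nat.exists_eq_add_of_le' ht
  rw [TOdo, binTau_eq ht h1 h2, Nat.add_sub_cancel, sum_Icc_inv_two_pow, pow_succ]
  ring

def dyadicIco (m a : ℕ) : Set ℝ := Set.Ico (a / 2 ^ m) ((a + 1) / 2 ^ m)

lemma mem_dyadicIco {m a : ℕ} {r : ℝ} :
    r ∈ dyadicIco m a ↔ a ≤ r * 2 ^ m ∧ r * 2 ^ m < a + 1 := by
  rw [dyadicIco, Set.mem_Ico, div_le_iff₀ (by positivity), lt_div_iff₀ (by positivity)]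

lemma dyadicIco_subset_Ico {m a : ℕ} (ha : a < 2 ^ m) : dyadicIco m a ⊆ Set.Ico 0 1 := by
  intro r hr
  rw [mem_dyadicIco] at hr
  have : (a : ℝ) + 1 ≤ 2 ^ m := by exact_mod_cast ha
  have h2m : (0 : ℝ) < 2 ^ m := by positivity
  constructor <;> nlinarith

lemma volume_dyadicIco (m a : ℕ) : volume (dyadicIco m a) = ENNReal.ofReal (2⁻¹ ^ m) := by
  rw [dyadicIco, Real.volume_Ico, ← sub_div, add_sub_cancel_left, one_div, inv_pow]

lemma dyadicIco_zero (m : ℕ) : dyadicIco m 0 = Set.Ico 0 (2⁻¹ ^ m) := by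
  simp [dyadicIco]

-- By `TOdo_eq` with `t = m - w`, `T` translates by `1 - 3 ⬝ 2^{w-m}`; this is `h`.
lemma mapsTo_TOdo_dyadicIco {m w a a' : ℕ} (hw : w < m) (ha : 2 ^ w ≤ a) (ha' : a < 2 ^ (w + 1))
    (h : a' + 3 * 2 ^ w = a + 2 ^ m) : Set.MapsTo TOdo (dyadicIco m a) (dyadicIco m a') := by
  intro r hr
  obtain ⟨t, rfl⟩ := Nat.exists_eq_add_of_lt hw
  rw [mem_dyadicIco] at hr ⊢
  have hx : r * 2 ^ (w + t + 1) = r * 2 ^ (t + 1) * 2 ^ w := by ring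
  have hinv : (2 : ℝ)⁻¹ ^ (t + 1) * 2 ^ (w + t + 1) = 2 ^ w := by
    rw [show w + t + 1 = (t + 1) + w by ring, pow_add (2 : ℝ) (t + 1) w, ← mul_assoc, ← mul_pow,
      inv_mul_cancel₀ two_ne_zero, one_pow, one_mul]
  have h2w : (0 : ℝ) < 2 ^ w := by positivity
  have hlo : (1 : ℝ) * 2 ^ w ≤ r * 2 ^ (t + 1) * 2 ^ w := by
    rw [one_mul, ← hx]; exact le_trans (by exact_mod_cast ha) hr.1
  have hhi : r * 2 ^ (t + 1) * 2 ^ w < 2 * 2 ^ w := by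
    rw [← hx, ← pow_succ']; exact hr.2.trans_le (by exact_mod_cast ha')
  have hT : TOdo r * 2 ^ (w + t + 1) = r * 2 ^ (w + t + 1) + 2 ^ (w + t + 1) - 3 * 2 ^ w := by
    rw [TOdo_eq (t := t + 1) (by omega) (le_of_mul_le_mul_right hlo h2w)
      (lt_of_mul_lt_mul_right hhi h2w.le)]
    linear_combination (-3) * hinv
  have hh : (a' : ℝ) + 3 * 2 ^ w = a + 2 ^ (w + t + 1) := by exact_mod_cast h
  rw [hT]
  constructor <;> linarith [hr.1, hr.2]

def bitReverse : ℕ → ℕ → ℕ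
  | 0, _ => 0
  | m + 1, b => b % 2 * 2 ^ m + bitReverse m (b / 2)

lemma bitReverse_lt (m b : ℕ) : bitReverse m b < 2 ^ m := by
  induction m generalizing b with
  | zero => simp [bitReverse]
  | succ m ih =>
    have := ih (b / 2)
    have : b % 2 * 2 ^ m ≤ 2 ^ m := by
      calc b % 2 * 2 ^ m ≤ 1 * 2 ^ m := Nat.mul_le_mul_right _ (by omega)
        _ = 2 ^ m := one_mul _
    rw [bitReverse, pow_succ]
    omega

@[simp]
lemma bitReverse_zero_right (m : ℕ) : bitReverse m 0 = 0 := by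
  induction m with
  | zero => rfl
  | succ m ih => simp [bitReverse, ih]

lemma bitReverse_pred {m b : ℕ} (hb : 0 < b) (hbm : b < 2 ^ m) :
    ∃ w < m, 2 ^ w ≤ bitReverse m b ∧ bitReverse m b < 2 ^ (w + 1) ∧
      bitReverse m (b - 1) + 3 * 2 ^ w = bitReverse m b + 2 ^ m := by
  induction m generalizing b with
  | zero => simp at hbm; omega
  | succ m ih =>
    rcases Nat.even_or_odd' b with ⟨q, rfl | rfl⟩
    · obtain ⟨w, hw, h1, h2, h3⟩ := ih (b := q) (by omega) (by rw [pow_succ] at hbm; omega)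
      refine ⟨w, by omega, ?_⟩
      have e1 : (2 * q - 1) % 2 = 1 := by omega
      have e2 : (2 * q - 1) / 2 = q - 1 := by omega
      simp only [bitReverse, Nat.mul_mod_right, Nat.mul_div_cancel_left q two_pos, e1, e2]
      rw [pow_succ]
      omega
    · refine ⟨m, by omega, ?_⟩
      have := bitReverse_lt m q
      have e1 : (2 * q + 1) % 2 = 1 := by omega
      have e2 : (2 * q + 1) / 2 = q := by omega
      simp only [bitReverse, Nat.add_sub_cancel, Nat.mul_mod_right,
        Nat.mul_div_cancel_left q two_pos, e1, e2]
      rw [pow_succ]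
      omega

lemma mapsTo_iterate_TOdo_dyadicIco {m b k : ℕ} (hbm : b < 2 ^ m) (hk : k ≤ b) :
    Set.MapsTo TOdo^[k] (dyadicIco m (bitReverse m b)) (dyadicIco m (bitReverse m (b - k))) := by
  induction k with
  | zero => exact Set.mapsTo_id _
  | succ k ih =>
    obtain ⟨w, hw, h1, h2, h3⟩ := bitReverse_pred (m := m) (b := b - k) (by omega) (by omega)
    rw [Function.iterate_succ']
    exact (mapsTo_TOdo_dyadicIco hw h1 h2 h3).comp (ih (by omega))

lemma iterate_TOdo_mem_CsetAll {i b k : ℕ} (hb : b < 2 ^ (2 * i + 3)) (hk : k ≤ b)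
    (hbk : b - k < 2 ^ i) {ω : ℝ} (hω : ω ∈ dyadicIco (2 * i + 3) (bitReverse (2 * i + 3) b)) :
    TOdo^[k] ω ∈ CsetAll := by
  have hJ : TOdo^[k] ω ∈ Jset (i + 1) (b - k) := by
    refine ⟨dyadicIco_subset_Ico (bitReverse_lt _ _) (mapsTo_iterate_TOdo_dyadicIco hb hk hω), ?_⟩
    have h0 := mapsTo_iterate_TOdo_dyadicIco hb le_rfl hω
    rw [Nat.sub_self, bitReverse_zero_right, dyadicIco_zero] at h0
    rwa [Set.mem_preimage, ← Function.iterate_add_apply, Nat.sub_add_cancel hk]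
  exact Set.mem_iUnion.mpr ⟨i + 1, Or.inl (Set.mem_biUnion (Finset.mem_range.mpr hbk) hJ)⟩

lemma measurable_binDigit (i : ℕ) : Measurable (binDigit i) :=
  (Measurable.of_discrete (f := (· % 2 : ℤ → ℤ))).comp
    (Int.measurable_floor.comp (measurable_id.mul_const _))

lemma measurable_binTau : Measurable binTau :=
  Nat.measurable_sInf_setOf fun n ↦ measurable_const.and ((measurable_binDigit n).eq_const 1)

lemma measurable_TOdo : Measurable TOdo :=
  (measurable_id.sub ((Measurable.of_discrete (f := ((2 : ℝ)⁻¹ ^ ·))).comp measurable_binTau)).add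
    ((Measurable.of_discrete (f := fun n ↦ ∑ l ∈ Finset.Icc 1 (n - 1), (2 : ℝ)⁻¹ ^ l)).comp
      measurable_binTau)

lemma measurableSet_Jset (i j : ℕ) : MeasurableSet (Jset i j) :=
  measurableSet_Ico.inter (measurable_TOdo.iterate j measurableSet_Ico)

lemma measurableSet_CsetAll : MeasurableSet CsetAll :=
  MeasurableSet.iUnion fun
    | 0 => MeasurableSet.empty.union measurableSet_Ico
    | _ + 1 => (Finset.measurableSet_biUnion _ fun _ _ ↦ measurableSet_Jset _ _).union
        (Finset.measurableSet_biUnion _ fun _ _ ↦ measurableSet_Jset _ _)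

noncomputable def visitC (n : ℕ) (ω : ℝ) : ℝ := CsetAll.indicator (fun _ ↦ 1) (TOdo^[n] ω)

lemma measurable_visitC (n : ℕ) : Measurable (visitC n) :=
  (measurable_const.indicator measurableSet_CsetAll).comp (measurable_TOdo.iterate n)

lemma abs_sum_visitC_le (F : Finset ℕ) (ω : ℝ) : |∑ k ∈ F, visitC k ω| ≤ F.card := by
  rw [abs_of_nonneg (Finset.sum_nonneg fun k _ ↦ Set.indicator_nonneg (fun _ _ ↦ zero_le_one) _)]
  have hle : ∀ k, visitC k ω ≤ 1 := fun k ↦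
    Set.indicator_apply_le' (fun _ ↦ le_rfl) (fun _ ↦ zero_le_one)
  exact (Finset.sum_le_sum fun k _ ↦ hle k).trans (by simp)

instance : IsProbabilityMeasure (volume.restrict (Set.Ico (0 : ℝ) 1)) :=
  ⟨by simp⟩

lemma cgf_sum_visitC_le (F : Finset ℕ) (θ : ℝ) :
    cgf (fun ω ↦ ∑ k ∈ F, visitC k ω) (volume.restrict (Set.Ico 0 1)) θ ≤ |θ| * F.card :=
  cgf_le_abs_mul (Finset.measurable_sum F fun k _ ↦ measurable_visitC k).aemeasurable
    (abs_sum_visitC_le F)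

lemma mul_card_sub_le_cgf_sum_visitC {i b : ℕ} {F : Finset ℕ} (hb : b < 2 ^ (2 * i + 3))
    (hF : ∀ k ∈ F, k ≤ b ∧ b - k < 2 ^ i) (θ : ℝ) :
    θ * F.card - (2 * i + 3) * log 2 ≤
      cgf (fun ω ↦ ∑ k ∈ F, visitC k ω) (volume.restrict (Set.Ico 0 1)) θ := by
  set E := dyadicIco (2 * i + 3) (bitReverse (2 * i + 3) b)
  have hEvol : (volume.restrict (Set.Ico (0 : ℝ) 1)).real E = 2⁻¹ ^ (2 * i + 3) := by
    rw [measureReal_restrict_apply' measurableSet_Ico,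
      Set.inter_eq_self_of_subset_left (dyadicIco_subset_Ico (bitReverse_lt _ _)),
      measureReal_def, volume_dyadicIco, ENNReal.toReal_ofReal (by positivity)]
  have hsum : ∀ ω ∈ E, ∑ k ∈ F, visitC k ω = F.card := fun ω hω ↦ by
    calc ∑ k ∈ F, visitC k ω = ∑ k ∈ F, 1 := Finset.sum_congr rfl fun k hk ↦
          Set.indicator_of_mem (iterate_TOdo_mem_CsetAll hb (hF k hk).1 (hF k hk).2 hω) _
      _ = F.card := by simp
  have := mul_add_log_measureReal_le_cgf (μ := volume.restrict (Set.Ico 0 1)) (t := θ) (E := E)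
    (integrable_exp_mul_of_mem_Icc
      (Finset.measurable_sum F fun k _ ↦ measurable_visitC k).aemeasurable
      (ae_of_all _ fun ω ↦ abs_le.mp (abs_sum_visitC_le F ω)))
    measurableSet_Ico (by rw [hEvol]; positivity) hsum
  rw [hEvol, log_pow, log_inv] at this
  push_cast at this
  linarith

lemma tendsto_mul_log_two_div_two_pow :
    Tendsto (fun i : ℕ ↦ (2 * i + 3) * log 2 / 2 ^ i) atTop (nhds 0) := by
  have h1 := (tendsto_pow_const_div_const_pow_of_one_lt 1 one_lt_two).const_mul (2 * log 2)
  have h2 := (tendsto_pow_atTop_nhds_zero_of_lt_one (r := (2 : ℝ)⁻¹) (by norm_num)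
    (by norm_num)).const_mul (3 * log 2)
  have h := h1.add h2
  rw [mul_zero, mul_zero, add_zero] at h
  refine h.congr fun i ↦ ?_
  rw [pow_one, inv_pow]
  field_simp

lemma sub_le_cgf_sum_visitC_div {i b : ℕ} {F : Finset ℕ} (hb : b < 2 ^ (2 * i + 3))
    (hF : ∀ k ∈ F, k ≤ b ∧ b - k < 2 ^ i) (hcard : F.card = 2 ^ i) (θ : ℝ) :
    θ - (2 * i + 3) * log 2 / 2 ^ i ≤
      cgf (fun ω ↦ ∑ k ∈ F, visitC k ω) (volume.restrict (Set.Ico 0 1)) θ / 2 ^ i := by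
  have := mul_card_sub_le_cgf_sum_visitC hb hF θ
  rw [hcard, Nat.cast_pow, Nat.cast_two] at this
  rw [le_div_iff₀ (by positivity), sub_mul, div_mul_cancel₀ _ (by positivity)]
  exact this

lemma tendsto_cgf_sum_range_visitC_div {θ : ℝ} (hθ : 0 < θ) :
    Tendsto (fun i : ℕ ↦ cgf (fun ω ↦ ∑ j ∈ Finset.range (2 ^ i), visitC j ω)
      (volume.restrict (Set.Ico 0 1)) θ / 2 ^ i) atTop (nhds θ) := by
  refine tendsto_of_tendsto_of_tendsto_of_le_of_le
    (by simpa using tendsto_const_nhds.sub tendsto_mul_log_two_div_two_pow) tendsto_const_nhds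
    (fun i ↦ ?_) (fun i ↦ ?_)
  · have := Nat.one_le_two_pow (n := i)
    refine sub_le_cgf_sum_visitC_div (b := 2 ^ i - 1) ?_ (fun k hk ↦ ?_) (Finset.card_range _) θ
    · exact (Nat.sub_le _ _).trans_lt (Nat.pow_lt_pow_right one_lt_two (by omega))
    · rw [Finset.mem_range] at hk; omega
  · rw [div_le_iff₀ (by positivity)]
    simpa [abs_of_pos hθ] using cgf_sum_visitC_le (Finset.range (2 ^ i)) θ

lemma le_limsup_cgf_sum_Icc_visitC (θ : ℝ) :
    θ ≤ limsup (fun n : ℕ ↦ 1 / (n : ℝ) * cgf (fun ω ↦ ∑ k ∈ Finset.Icc 1 n, visitC k ω)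
      (volume.restrict (Set.Ico 0 1)) θ) atTop := by
  have hbdd : IsBoundedUnder (· ≤ ·) atTop fun n : ℕ ↦ 1 / (n : ℝ) *
      cgf (fun ω ↦ ∑ k ∈ Finset.Icc 1 n, visitC k ω) (volume.restrict (Set.Ico 0 1)) θ := by
    refine isBoundedUnder_of ⟨|θ|, fun n ↦ ?_⟩
    have := cgf_sum_visitC_le (Finset.Icc 1 n) θ
    rw [Nat.card_Icc, Nat.add_sub_cancel] at this
    rcases n.eq_zero_or_pos with rfl | hn
    · simp
    · rw [one_div_mul_eq_div, div_le_iff₀ (by positivity)]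
      exact this
  refine le_of_forall_sub_le fun ε hε ↦ le_limsup_of_frequently_le ?_ hbdd
  have hsmall := tendsto_mul_log_two_div_two_pow.eventually (gt_mem_nhds hε)
  refine (tendsto_pow_atTop_atTop_of_one_lt one_lt_two).frequently
    (hsmall.mono fun i hi ↦ ?_).frequently
  have := sub_le_cgf_sum_visitC_div (i := i) (b := 2 ^ i) (F := Finset.Icc 1 (2 ^ i))
    (Nat.pow_lt_pow_right one_lt_two (by omega)) (fun k hk ↦ by rw [Finset.mem_Icc] at hk; omega)
    (by simp) θ
  simp only [Nat.cast_pow, Nat.cast_ofNat, one_div_mul_eq_div]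
  linarith

/-- For the process `Y n ω = 1_C(T^n ω)` built from the binary odometer, the
cumulant limit along `n_i = 2^{i-1}` equals `θ` for every `θ > 0`; hence the
set `{θ : λ(θ) - θ·1 < 0}` is empty (service rate `s = 1`), where
`λ(θ) = limsup_n (1/n) log E[exp(θ ∑_{k=1}^n Y_k)]`. -/
theorem stmt_18 (Y : ℕ → ℝ → ℝ)
    (hY : ∀ n ω, Y n ω = Set.indicator CsetAll (fun _ => (1 : ℝ)) (TOdo^[n] ω)) :
    (∀ θ : ℝ, 0 < θ →
      Tendsto (fun i : ℕ => (1 / ((2 ^ (i - 1) : ℕ) : ℝ)) *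
        Real.log (∫ ω, Real.exp (θ * ∑ j ∈ Finset.range (2 ^ (i - 1)), Y j ω)
          ∂(volume.restrict (Set.Ico (0 : ℝ) 1)))) atTop (nhds θ)) ∧
    {θ : ℝ | Filter.limsup (fun n : ℕ => (1 / (n : ℝ)) *
        Real.log (∫ ω, Real.exp (θ * ∑ k ∈ Finset.Icc 1 n, Y k ω)
          ∂(volume.restrict (Set.Ico (0 : ℝ) 1)))) atTop - θ * 1 < 0} = ∅ := by
  obtain rfl : Y = visitC := funext₂ hY
  refine ⟨fun θ hθ ↦ ?_, Set.eq_empty_of_forall_notMem fun θ hθ ↦ ?_⟩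
  · refine ((tendsto_cgf_sum_range_visitC_div hθ).comp (tendsto_sub_atTop_nat 1)).congr fun i ↦ ?_
    simp only [Function.comp_apply, Nat.cast_pow, Nat.cast_ofNat, one_div_mul_eq_div]
    rfl
  · have := le_limsup_cgf_sum_Icc_visitC θ
    simp only [Set.mem_ofPred_eq, mul_one, sub_neg] at hθ
    exact hθ.not_ge this
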